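/- arXiv:2203.08023 — 2 statements merged into one kernel-verified Lean document; each statement's English description precedes it below -/
import Mathlib

section
/- For n ≥ 3 and γ ∈ (0,1], the unique n-qubit density matrix whose two-qubit reduced states on every pair (j, j+1), 1 ≤ j ≤ n−1, equal ρ_n(γ) = ((n−2γ)/n)|00⟩⟨00| + (2γ/n)|Ψ⁺⟩⟨Ψ⁺| is Ω_n(γ) = γ|W_n⟩⟨W_n| + (1−γ)|0ⁿ⟩⟨0ⁿ|. -/
open Matrix ComplexOrder

/-- Two-qubit reduced state (marginal) of an n-qubit matrix on qubits i and j. -/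
noncomputable def marg {n : ℕ} (ρ : Matrix (Fin n → Fin 2) (Fin n → Fin 2) ℂ)
    (i j : Fin n) : Matrix (Fin 2 × Fin 2) (Fin 2 × Fin 2) ℂ :=
  fun a b => ∑ f : Fin n → Fin 2, ∑ g : Fin n → Fin 2,
    if f i = a.1 ∧ f j = a.2 ∧ g i = b.1 ∧ g j = b.2 ∧
       (∀ k, k ≠ i → k ≠ j → f k = g k) then ρ f g else 0

/-- The n-qubit W state |W_n⟩ = (1/√n) Σ_j |1_j⟩ as a vector of amplitudes. -/
noncomputable def Wvec (n : ℕ) : (Fin n → Fin 2) → ℂ :=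
  fun f => if (∑ k, (f k).val) = 1 then ((1 / Real.sqrt n : ℝ) : ℂ) else 0

/-- The all-zeros n-qubit state |0ⁿ⟩ as a vector of amplitudes. -/
noncomputable def zeroVec (n : ℕ) : (Fin n → Fin 2) → ℂ :=
  fun f => if (∀ k, f k = 0) then 1 else 0

/-- Ω_n(γ) = γ|W_n⟩⟨W_n| + (1−γ)|0ⁿ⟩⟨0ⁿ|. -/
noncomputable def Omega (n : ℕ) (γ : ℝ) :
    Matrix (Fin n → Fin 2) (Fin n → Fin 2) ℂ :=
  fun f g => (γ : ℂ) * Wvec n f * (starRingEnd ℂ) (Wvec n g)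
    + ((1 - γ : ℝ) : ℂ) * zeroVec n f * (starRingEnd ℂ) (zeroVec n g)

/-- ρ_n(γ) = ((n−2γ)/n)|00⟩⟨00| + (2γ/n)|Ψ⁺⟩⟨Ψ⁺| with |Ψ⁺⟩=(|01⟩+|10⟩)/√2. -/
noncomputable def rhoTarget (n : ℕ) (γ : ℝ) :
    Matrix (Fin 2 × Fin 2) (Fin 2 × Fin 2) ℂ :=
  fun a b =>
    if a = (0,0) ∧ b = (0,0) then ((((n : ℝ) - 2*γ)/n : ℝ) : ℂ)
    else if (a = (0,1) ∨ a = (1,0)) ∧ (b = (0,1) ∨ b = (1,0)) then ((γ/n : ℝ) : ℂ)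
    else 0

section Aux

variable {n : ℕ}

/-- Single-excitation bit string. -/
def ev (i : Fin n) : Fin n → Fin 2 := fun m => if m = i then 1 else 0

/-- All-zero bit string. -/
def zf : Fin n → Fin 2 := fun _ => 0

/-- Hamming weight. -/
def wt (f : Fin n → Fin 2) : ℕ := ∑ k, (f k).val

/-- Basis vector. -/
noncomputable def bv (f : Fin n → Fin 2) : (Fin n → Fin 2) → ℂ := fun x => if x = f then 1 else 0

/-- Overwrite values at two positions. -/
def pset (i j : Fin n) (a : Fin 2 × Fin 2) (h : Fin n → Fin 2) : Fin n → Fin 2 :=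
  Function.update (Function.update h i a.1) j a.2

lemma pset_i {i j : Fin n} (hij : i ≠ j) (a h) : pset i j a h i = a.1 := by
  simp [pset, Function.update_of_ne hij]

lemma pset_j {i j : Fin n} (a h) : pset i j a h j = a.2 := by simp [pset]

lemma pset_k {i j k : Fin n} (hki : k ≠ i) (hkj : k ≠ j) (a) (h) :
    pset i j a h k = h k := by
  simp [pset, Function.update_of_ne hki, Function.update_of_ne hkj]

lemma quad_single (ρ : Matrix (Fin n → Fin 2) (Fin n → Fin 2) ℂ) (f) :
    star (bv f) ⬝ᵥ ρ *ᵥ bv f = ρ f f := by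
  simp [bv, dotProduct, mulVec, apply_ite, Finset.sum_ite_eq']

lemma mulVec_bv (ρ : Matrix (Fin n → Fin 2) (Fin n → Fin 2) ℂ) (f g) :
    (ρ *ᵥ bv f) g = ρ g f := by
  simp [bv, mulVec, dotProduct, apply_ite, Finset.sum_ite_eq']

lemma mulVec_bv_sub (ρ : Matrix (Fin n → Fin 2) (Fin n → Fin 2) ℂ) (f f' g) :
    (ρ *ᵥ (bv f - bv f')) g = ρ g f - ρ g f' := by
  rw [mulVec_sub]
  simp [mulVec_bv]

lemma quad_pair (ρ : Matrix (Fin n → Fin 2) (Fin n → Fin 2) ℂ) {f f' : Fin n → Fin 2} (hff : f ≠ f') :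
    star (bv f - bv f') ⬝ᵥ ρ *ᵥ (bv f - bv f')
      = ρ f f - ρ f f' - ρ f' f + ρ f' f' := by
  have h1 : ρ *ᵥ (bv f - bv f') = fun x => ρ x f - ρ x f' := by
    funext x
    rw [mulVec_sub]
    simp [bv, mulVec, dotProduct, apply_ite, Finset.sum_ite_eq']
  rw [h1]
  have key : ∀ x : Fin n → Fin 2, star ((bv f - bv f') x) * (ρ x f - ρ x f')
      = (if x = f then ρ x f - ρ x f' else 0) + (if x = f' then ρ x f' - ρ x f else 0) := by
    intro x
    by_cases h1 : x = f <;> by_cases h2 : x = f' <;>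
      simp [bv, h1, h2, hff, Ne.symm hff] <;> try ring
  simp only [dotProduct, Pi.star_apply]
  rw [Finset.sum_congr rfl fun x _ => key x, Finset.sum_add_distrib,
    Finset.sum_ite_eq' Finset.univ f, Finset.sum_ite_eq' Finset.univ f']
  simp only [Finset.mem_univ, if_true]
  ring

lemma marg_sum (ρ : Matrix (Fin n → Fin 2) (Fin n → Fin 2) ℂ) {i j : Fin n} (hij : i ≠ j) (a b) :
    marg ρ i j a b
      = ∑ h ∈ Finset.univ.filter (fun h : Fin n → Fin 2 => h i = 0 ∧ h j = 0),
          ρ (pset i j a h) (pset i j b h) := by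
  have inner : ∀ f : Fin n → Fin 2,
      (∑ g : Fin n → Fin 2, if f i = a.1 ∧ f j = a.2 ∧ g i = b.1 ∧ g j = b.2 ∧
        (∀ k, k ≠ i → k ≠ j → f k = g k) then ρ f g else 0)
      = if f i = a.1 ∧ f j = a.2 then ρ f (pset i j b f) else 0 := by
    intro f
    by_cases hf : f i = a.1 ∧ f j = a.2
    · rw [if_pos hf]
      rw [Finset.sum_eq_single (pset i j b f)]
      · rw [if_pos]
        exact ⟨hf.1, hf.2, pset_i hij b f, pset_j b f, fun k hki hkj => (pset_k hki hkj b f).symm⟩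
      · intro g _ hg
        rw [if_neg]
        rintro ⟨-, -, h1, h2, h3⟩
        apply hg
        funext k
        by_cases hki : k = i
        · subst hki; rw [h1, pset_i hij]
        · by_cases hkj : k = j
          · subst hkj; rw [h2, pset_j]
          · rw [pset_k hki hkj b f, ← h3 k hki hkj]
      · intro hmem; exact absurd (Finset.mem_univ _) hmem
    · rw [if_neg hf]
      apply Finset.sum_eq_zero
      intro g _
      rw [if_neg]
      rintro ⟨h1, h2, -⟩
      exact hf ⟨h1, h2⟩
  rw [marg, Finset.sum_congr rfl fun f _ => inner f]
  rw [← Finset.sum_filter]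
  apply Finset.sum_nbij' (fun f => pset i j (0,0) f) (fun h => pset i j a h)
  · intro f hf
    simp only [Finset.mem_filter, Finset.mem_univ, true_and]
    exact ⟨pset_i hij _ _, pset_j _ _⟩
  · intro h hh
    simp only [Finset.mem_filter, Finset.mem_univ, true_and] at hh ⊢
    exact ⟨pset_i hij _ _, pset_j _ _⟩
  · intro f hf
    simp only [Finset.mem_filter, Finset.mem_univ, true_and] at hf
    funext k
    by_cases hki : k = i
    · subst hki; rw [pset_i hij, hf.1]
    · by_cases hkj : k = j
      · subst hkj; rw [pset_j, hf.2]
      · simp only [pset_k hki hkj]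
  · intro h hh
    simp only [Finset.mem_filter, Finset.mem_univ, true_and] at hh
    funext k
    by_cases hki : k = i
    · subst hki; rw [pset_i hij, hh.1]
    · by_cases hkj : k = j
      · subst hkj; rw [pset_j, hh.2]
      · simp only [pset_k hki hkj]
  · intro f hf
    simp only [Finset.mem_filter, Finset.mem_univ, true_and] at hf
    congr 1
    · funext k
      by_cases hki : k = i
      · subst hki; rw [pset_i hij]; exact hf.1
      · by_cases hkj : k = j
        · subst hkj; rw [pset_j]; exact hf.2
        · simp only [pset_k hki hkj]
    · funext k
      by_cases hki : k = i
      · subst hki; simp only [pset_i hij]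
      · by_cases hkj : k = j
        · subst hkj; simp only [pset_j]
        · simp only [pset_k hki hkj]

end Aux

section Main
set_option maxHeartbeats 1600000

variable {n : ℕ} {γ : ℝ} {ρ : Matrix (Fin n → Fin 2) (Fin n → Fin 2) ℂ}

/-- Columns indexed by a string with two consecutive ones vanish. -/
lemma killcons (hpsd : ρ.PosSemidef)
    (hmarg : ∀ (j : ℕ) (hj : j + 1 < n),
      marg ρ ⟨j, Nat.lt_of_succ_lt hj⟩ ⟨j + 1, hj⟩ = rhoTarget n γ)
    (j : ℕ) (hj : j + 1 < n) (f : Fin n → Fin 2)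
    (h1 : f ⟨j, Nat.lt_of_succ_lt hj⟩ = 1) (h2 : f ⟨j+1, hj⟩ = 1) (g) : ρ g f = 0 := by
  set i0 : Fin n := ⟨j, Nat.lt_of_succ_lt hj⟩ with hi0
  set i1 : Fin n := ⟨j+1, hj⟩ with hi1
  have hij : i0 ≠ i1 := by simp [hi0, hi1, Fin.ext_iff]
  have hm := congrFun (congrFun (hmarg j hj) (1,1)) (1,1)
  rw [marg_sum ρ hij] at hm
  have hval : rhoTarget n γ (1,1) (1,1) = (0 : ℂ) := by
    simp only [rhoTarget]; rw [if_neg (by decide), if_neg (by decide)]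
  rw [hval] at hm
  have hnn : ∀ h ∈ Finset.univ.filter (fun h : Fin n → Fin 2 => h i0 = 0 ∧ h i1 = 0),
      (0:ℂ) ≤ ρ (pset i0 i1 (1,1) h) (pset i0 i1 (1,1) h) := by
    intro h _
    have := hpsd.dotProduct_mulVec_nonneg (bv (pset i0 i1 (1,1) h))
    rwa [quad_single] at this
  have hz := (Finset.sum_eq_zero_iff_of_nonneg hnn).mp hm
  have hmem : pset i0 i1 (0,0) f ∈
      Finset.univ.filter (fun h : Fin n → Fin 2 => h i0 = 0 ∧ h i1 = 0) := by
    simp only [Finset.mem_filter, Finset.mem_univ, true_and]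
    exact ⟨pset_i hij _ _, pset_j _ _⟩
  have hf : pset i0 i1 (1,1) (pset i0 i1 (0,0) f) = f := by
    funext k
    by_cases hki : k = i0
    · subst hki; rw [pset_i hij]; exact h1.symm
    · by_cases hkj : k = i1
      · subst hkj; rw [pset_j]; exact h2.symm
      · rw [pset_k hki hkj, pset_k hki hkj]
  have hzz : ρ f f = 0 := by
    have := hz _ hmem
    rwa [hf] at this
  have hq : star (bv f) ⬝ᵥ ρ *ᵥ bv f = 0 := by rw [quad_single]; exact hzz
  have h0 := (hpsd.dotProduct_mulVec_zero_iff (bv f)).mp hq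
  have := congrFun h0 g
  rwa [mulVec_bv] at this

/-- Columns related by swapping a 10 pattern on a consecutive pair are equal. -/
lemma swapcols (hpsd : ρ.PosSemidef)
    (hmarg : ∀ (j : ℕ) (hj : j + 1 < n),
      marg ρ ⟨j, Nat.lt_of_succ_lt hj⟩ ⟨j + 1, hj⟩ = rhoTarget n γ)
    (j : ℕ) (hj : j + 1 < n) (h : Fin n → Fin 2) (g) :
    ρ g (pset ⟨j, Nat.lt_of_succ_lt hj⟩ ⟨j+1, hj⟩ (1,0) h) = ρ g (pset ⟨j, Nat.lt_of_succ_lt hj⟩ ⟨j+1, hj⟩ (0,1) h) := by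
  set i0 : Fin n := ⟨j, Nat.lt_of_succ_lt hj⟩ with hi0
  set i1 : Fin n := ⟨j+1, hj⟩ with hi1
  have hij : i0 ≠ i1 := by simp [hi0, hi1, Fin.ext_iff]
  -- reduce to the case h ∈ H
  have hindep : ∀ a : Fin 2 × Fin 2, pset i0 i1 a h = pset i0 i1 a (pset i0 i1 (0,0) h) := by
    intro a; funext k
    by_cases hki : k = i0
    · subst hki; rw [pset_i hij, pset_i hij]
    · by_cases hkj : k = i1
      · subst hkj; rw [pset_j, pset_j]
      · rw [pset_k hki hkj, pset_k hki hkj, pset_k hki hkj]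
  rw [hindep (1,0), hindep (0,1)]
  set h' := pset i0 i1 (0,0) h with hh'
  have hmem : h' ∈ Finset.univ.filter (fun h : Fin n → Fin 2 => h i0 = 0 ∧ h i1 = 0) := by
    simp only [Finset.mem_filter, Finset.mem_univ, true_and]
    exact ⟨pset_i hij _ _, pset_j _ _⟩
  have hval : rhoTarget n γ (1,0) (1,0) = ((γ/n : ℝ) : ℂ) := by
    simp only [rhoTarget]; rw [if_neg (by decide), if_pos (by decide)]
  have hval2 : rhoTarget n γ (1,0) (0,1) = ((γ/n : ℝ) : ℂ) := by
    simp only [rhoTarget]; rw [if_neg (by decide), if_pos (by decide)]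
  have hval3 : rhoTarget n γ (0,1) (1,0) = ((γ/n : ℝ) : ℂ) := by
    simp only [rhoTarget]; rw [if_neg (by decide), if_pos (by decide)]
  have hval4 : rhoTarget n γ (0,1) (0,1) = ((γ/n : ℝ) : ℂ) := by
    simp only [rhoTarget]; rw [if_neg (by decide), if_pos (by decide)]
  have m1 := congrFun (congrFun (hmarg j hj) (1,0)) (1,0)
  have m2 := congrFun (congrFun (hmarg j hj) (1,0)) (0,1)
  have m3 := congrFun (congrFun (hmarg j hj) (0,1)) (1,0)
  have m4 := congrFun (congrFun (hmarg j hj) (0,1)) (0,1)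
  rw [marg_sum ρ hij, hval] at m1
  rw [marg_sum ρ hij, hval2] at m2
  rw [marg_sum ρ hij, hval3] at m3
  rw [marg_sum ρ hij, hval4] at m4
  have hne : ∀ hx : Fin n → Fin 2, pset i0 i1 (1,0) hx ≠ pset i0 i1 (0,1) hx := by
    intro hx heq
    have := congrFun heq i0
    rw [pset_i hij, pset_i hij] at this
    exact (by decide : ((1:Fin 2),(0:Fin 2)).1 ≠ ((0:Fin 2),(1:Fin 2)).1) this
  have key : ∑ hx ∈ Finset.univ.filter (fun h : Fin n → Fin 2 => h i0 = 0 ∧ h i1 = 0),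
      (ρ (pset i0 i1 (1,0) hx) (pset i0 i1 (1,0) hx)
        - ρ (pset i0 i1 (1,0) hx) (pset i0 i1 (0,1) hx)
        - ρ (pset i0 i1 (0,1) hx) (pset i0 i1 (1,0) hx)
        + ρ (pset i0 i1 (0,1) hx) (pset i0 i1 (0,1) hx)) = 0 := by
    rw [Finset.sum_add_distrib, Finset.sum_sub_distrib, Finset.sum_sub_distrib, m1, m2, m3, m4]
    ring
  have hnn : ∀ hx ∈ Finset.univ.filter (fun h : Fin n → Fin 2 => h i0 = 0 ∧ h i1 = 0),
      (0:ℂ) ≤ (ρ (pset i0 i1 (1,0) hx) (pset i0 i1 (1,0) hx)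
        - ρ (pset i0 i1 (1,0) hx) (pset i0 i1 (0,1) hx)
        - ρ (pset i0 i1 (0,1) hx) (pset i0 i1 (1,0) hx)
        + ρ (pset i0 i1 (0,1) hx) (pset i0 i1 (0,1) hx)) := by
    intro hx _
    have := hpsd.dotProduct_mulVec_nonneg (bv (pset i0 i1 (1,0) hx) - bv (pset i0 i1 (0,1) hx))
    rwa [quad_pair ρ (hne hx)] at this
  have hz := (Finset.sum_eq_zero_iff_of_nonneg hnn).mp key
  have hq : star (bv (pset i0 i1 (1,0) h') - bv (pset i0 i1 (0,1) h'))
      ⬝ᵥ ρ *ᵥ (bv (pset i0 i1 (1,0) h') - bv (pset i0 i1 (0,1) h')) = 0 := by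
    rw [quad_pair ρ (hne h')]
    exact hz _ hmem
  have h0 := (hpsd.dotProduct_mulVec_zero_iff _).mp hq
  have h2 : ρ g (pset i0 i1 (1,0) h') - ρ g (pset i0 i1 (0,1) h') = 0 := by
    have := congrFun h0 g
    rwa [mulVec_bv_sub, Pi.zero_apply] at this
  exact sub_eq_zero.mp h2


lemma fin2_cases (x : Fin 2) : x = 0 ∨ x = 1 := by revert x; decide

/-- Columns indexed by a string with (at least) two ones vanish. -/
lemma pairKill (hpsd : ρ.PosSemidef)
    (hmarg : ∀ (j : ℕ) (hj : j + 1 < n),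
      marg ρ ⟨j, Nat.lt_of_succ_lt hj⟩ ⟨j + 1, hj⟩ = rhoTarget n γ) :
    ∀ (K i : ℕ) (hiK : i < K) (hK : K < n) (f : Fin n → Fin 2),
      f ⟨i, by omega⟩ = 1 → f ⟨K, hK⟩ = 1 → ∀ g, ρ g f = 0 := by
  intro K
  induction K using Nat.strong_induction_on with
  | _ K IH =>
    intro i hiK hK f h1 h2 g
    obtain ⟨j, rfl⟩ : ∃ j, K = j + 1 := ⟨K - 1, by omega⟩
    by_cases hij : i = j
    · subst hij
      exact killcons hpsd hmarg i hK f h1 h2 g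
    · have hi_lt : i < j := by omega
      rcases fin2_cases (f ⟨j, Nat.lt_of_succ_lt hK⟩) with hfj | hfj
      · -- move the one at j+1 to position j
        set i0 : Fin n := ⟨j, Nat.lt_of_succ_lt hK⟩ with hi0
        set i1 : Fin n := ⟨j+1, hK⟩ with hi1
        have hij' : i0 ≠ i1 := by simp [hi0, hi1, Fin.ext_iff]
        set h' := pset i0 i1 (0,0) f with hh'
        have hfeq : pset i0 i1 (0,1) h' = f := by
          funext k
          by_cases hki : k = i0
          · subst hki; rw [pset_i hij']; exact hfj.symm
          · by_cases hkj : k = i1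
            · subst hkj; rw [pset_j]; exact h2.symm
            · rw [pset_k hki hkj, hh', pset_k hki hkj]
        have hsw := swapcols hpsd hmarg j hK h' g
        rw [hfeq] at hsw
        have hne0 : (⟨i, by omega⟩ : Fin n) ≠ i0 := by simp [hi0, Fin.ext_iff]; omega
        have hne1 : (⟨i, by omega⟩ : Fin n) ≠ i1 := by simp [hi1, Fin.ext_iff]; omega
        have happ : ρ g (pset i0 i1 (1,0) h') = 0 := by
          apply IH j (by omega) i hi_lt (by omega) _ ?_ ?_ g
          · rw [pset_k hne0 hne1, hh', pset_k hne0 hne1]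
            exact h1
          · rw [pset_i hij']
        rw [← hsw]
        exact happ
      · exact killcons hpsd hmarg j hK f hfj h2 g

/-- All single-excitation columns agree. -/
lemma col_ev (hpsd : ρ.PosSemidef)
    (hmarg : ∀ (j : ℕ) (hj : j + 1 < n),
      marg ρ ⟨j, Nat.lt_of_succ_lt hj⟩ ⟨j + 1, hj⟩ = rhoTarget n γ) (hn : 0 < n) :
    ∀ (m : ℕ) (hm : m < n) (g), ρ g (ev ⟨m, hm⟩) = ρ g (ev ⟨0, hn⟩) := by
  intro m
  induction m with
  | zero => intro hm g; rfl
  | succ m IH =>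
    intro hm g
    have hm' : m < n := by omega
    have key := swapcols hpsd hmarg m hm zf g
    have hij' : (⟨m, Nat.lt_of_succ_lt hm⟩ : Fin n) ≠ ⟨m+1, hm⟩ := by simp [Fin.ext_iff]
    have e1 : pset (⟨m, Nat.lt_of_succ_lt hm⟩ : Fin n) ⟨m+1, hm⟩ (1,0) zf = ev ⟨m, hm'⟩ := by
      funext k
      by_cases hki : k = (⟨m, Nat.lt_of_succ_lt hm⟩ : Fin n)
      · subst hki; rw [pset_i hij']; simp [ev]
      · by_cases hkj : k = (⟨m+1, hm⟩ : Fin n)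
        · subst hkj; rw [pset_j]
          have : (⟨m+1, hm⟩ : Fin n) ≠ ⟨m, hm'⟩ := by simp [Fin.ext_iff]
          simp [ev, this]
        · rw [pset_k hki hkj]
          have : k ≠ (⟨m, hm'⟩ : Fin n) := hki
          simp [ev, zf, this]
    have e2 : pset (⟨m, Nat.lt_of_succ_lt hm⟩ : Fin n) ⟨m+1, hm⟩ (0,1) zf = ev ⟨m+1, hm⟩ := by
      funext k
      by_cases hki : k = (⟨m, Nat.lt_of_succ_lt hm⟩ : Fin n)
      · subst hki; rw [pset_i hij']
        have : (⟨m, Nat.lt_of_succ_lt hm⟩ : Fin n) ≠ ⟨m+1, hm⟩ := hij'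
        simp [ev, this]
      · by_cases hkj : k = (⟨m+1, hm⟩ : Fin n)
        · subst hkj; rw [pset_j]; simp [ev]
        · rw [pset_k hki hkj]
          simp [ev, zf, hkj]
    rw [e1, e2] at key
    rw [← key]
    exact IH hm' g

lemma fin2_val (x : Fin 2) : (x.val) = if x = 1 then 1 else 0 := by revert x; decide

lemma wt_card (f : Fin n → Fin 2) :
    wt f = (Finset.univ.filter fun k => f k = 1).card := by
  rw [Finset.card_filter]
  exact Finset.sum_congr rfl fun k _ => fin2_val (f k)

lemma wt_zf : wt (zf : Fin n → Fin 2) = 0 := by simp [wt, zf]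

lemma wt_ev (i : Fin n) : wt (ev i) = 1 := by
  rw [wt_card]
  have : (Finset.univ.filter fun k => ev i k = 1) = {i} := by
    ext k
    simp only [Finset.mem_filter, Finset.mem_univ, true_and, Finset.mem_singleton, ev]
    by_cases hk : k = i <;> simp [hk]
  rw [this, Finset.card_singleton]

lemma eq_zf_of_wt_zero (f : Fin n → Fin 2) (h : wt f = 0) : f = zf := by
  rw [wt, Finset.sum_eq_zero_iff] at h
  funext k
  have := h k (Finset.mem_univ k)
  exact Fin.ext (by simpa [zf] using this)

lemma eq_ev_of_wt_one (f : Fin n → Fin 2) (h : wt f = 1) : ∃ i, f = ev i := by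
  rw [wt_card] at h
  obtain ⟨i, hi⟩ := Finset.card_eq_one.mp h
  refine ⟨i, funext fun k => ?_⟩
  have hmem : ∀ m : Fin n, f m = 1 ↔ m = i := by
    intro m
    constructor
    · intro hm
      have : m ∈ Finset.univ.filter fun k => f k = 1 := by
        simp [hm]
      rw [hi] at this
      simpa using this
    · intro hm
      subst hm
      have : m ∈ ({m} : Finset (Fin n)) := Finset.mem_singleton_self m
      rw [← hi] at this
      simpa using this
  by_cases hk : k = i
  · subst hk
    rw [(hmem k).mpr rfl]
    simp [ev]
  · rcases fin2_cases (f k) with h0 | h1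
    · rw [h0]; simp [ev, hk]
    · exact absurd ((hmem k).mp h1) hk

lemma exists_pair_of_two_le_wt (f : Fin n → Fin 2) (h : 2 ≤ wt f) :
    ∃ (i K : ℕ) (hK : K < n) (hiK : i < K),
      f ⟨i, by omega⟩ = 1 ∧ f ⟨K, hK⟩ = 1 := by
  rw [wt_card] at h
  have h' : 1 < (Finset.univ.filter fun k => f k = 1).card := by omega
  obtain ⟨a, ha, b, hb, hab⟩ := Finset.one_lt_card.mp h'
  simp only [Finset.mem_filter, Finset.mem_univ, true_and] at ha hb
  rcases Nat.lt_or_ge a.val b.val with hlt | hge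
  · exact ⟨a.val, b.val, b.isLt, hlt, ha, hb⟩
  · have : b.val < a.val := by
      rcases Nat.lt_or_ge b.val a.val with h' | h'
      · exact h'
      · exact absurd (Fin.ext (le_antisymm hge h')).symm hab
    exact ⟨b.val, a.val, a.isLt, this, hb, ha⟩


lemma pset_zf_00 {i j : Fin n} (hij : i ≠ j) : pset i j (0,0) (zf : Fin n → Fin 2) = zf := by
  funext k
  by_cases hki : k = i
  · subst hki; rw [pset_i hij]; rfl
  · by_cases hkj : k = j
    · subst hkj; rw [pset_j]; rfl
    · rw [pset_k hki hkj]

lemma pset_zf_01 {i j : Fin n} (hij : i ≠ j) : pset i j (0,1) (zf : Fin n → Fin 2) = ev j := by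
  funext k
  by_cases hki : k = i
  · subst hki; rw [pset_i hij]; simp [ev, hij]
  · by_cases hkj : k = j
    · subst hkj; rw [pset_j]; simp [ev]
    · rw [pset_k hki hkj]; simp [ev, zf, hkj]

lemma Wvec_eq (f : Fin n → Fin 2) :
    Wvec n f = if wt f = 1 then ((1 / Real.sqrt n : ℝ) : ℂ) else 0 := rfl

lemma zeroVec_eq (f : Fin n → Fin 2) :
    zeroVec n f = if wt f = 0 then 1 else 0 := by
  by_cases h : wt f = 0
  · rw [if_pos h, zeroVec, if_pos]
    intro k
    rw [eq_zf_of_wt_zero f h]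
    rfl
  · rw [if_neg h, zeroVec, if_neg]
    intro hall
    exact h (by rw [show f = zf from funext hall, wt_zf])

lemma ev_inj : Function.Injective (ev : Fin n → (Fin n → Fin 2)) := by
  intro i k h
  by_contra hik
  have := congrFun h i
  simp [ev, hik] at this

lemma filter_wt_zero : (Finset.univ.filter fun f : Fin n → Fin 2 => wt f = 0) = {zf} := by
  ext f
  simp only [Finset.mem_filter, Finset.mem_univ, true_and, Finset.mem_singleton]
  constructor
  · exact eq_zf_of_wt_zero f
  · rintro rfl; exact wt_zf

lemma card_wt_one : (Finset.univ.filter fun f : Fin n → Fin 2 => wt f = 1).card = n := by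
  have himg : (Finset.univ.filter fun f : Fin n → Fin 2 => wt f = 1)
      = Finset.univ.image ev := by
    ext f
    simp only [Finset.mem_filter, Finset.mem_univ, true_and, Finset.mem_image]
    constructor
    · intro h
      obtain ⟨i, rfl⟩ := eq_ev_of_wt_one f h
      exact ⟨i, rfl⟩
    · rintro ⟨i, -, rfl⟩
      exact wt_ev i
  rw [himg, Finset.card_image_of_injective _ ev_inj, Finset.card_univ, Fintype.card_fin]

end Main

/-- For n ≥ 3 and γ ∈ (0,1], any n-qubit density matrix whose two-qubit marginals
on all consecutive pairs (j, j+1) equal ρ_n(γ) must be Ω_n(γ). -/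
theorem stmt4 (n : ℕ) (hn : 3 ≤ n) (γ : ℝ) (hγ : γ ∈ Set.Ioc (0:ℝ) 1)
    (ρ : Matrix (Fin n → Fin 2) (Fin n → Fin 2) ℂ)
    (hpsd : ρ.PosSemidef) (htr : ρ.trace = 1)
    (hmarg : ∀ (j : ℕ) (hj : j + 1 < n),
      marg ρ ⟨j, by omega⟩ ⟨j + 1, hj⟩ = rhoTarget n γ) :
    ρ = Omega n γ := by
  have h0n : 0 < n := by omega
  have hj0 : 0 + 1 < n := by omega
  have hcn : (n : ℂ) ≠ 0 := Nat.cast_ne_zero.mpr (by omega)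
  set E0 : Fin n := ⟨0, by omega⟩ with hE0
  set E1 : Fin n := ⟨0+1, hj0⟩ with hE1
  have hij : E0 ≠ E1 := by simp [hE0, hE1, Fin.ext_iff]
  -- kill high weight columns
  have kill2 : ∀ f : Fin n → Fin 2, 2 ≤ wt f → ∀ g, ρ g f = 0 := by
    intro f hf g
    obtain ⟨i, K, hK, hiK, h1, h2⟩ := exists_pair_of_two_le_wt f hf
    exact pairKill hpsd hmarg K i hiK hK f h1 h2 g
  have herm : ∀ f g, ρ f g = star (ρ g f) := fun f g => (hpsd.1.apply f g).symm
  have colE : ∀ (i : Fin n) g, ρ g (ev i) = ρ g (ev E0) := by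
    intro i g
    exact col_ev hpsd hmarg h0n i.val i.isLt g
  have e11 : ∀ i k : Fin n, ρ (ev i) (ev k) = ρ (ev E0) (ev E0) := by
    intro i k
    calc ρ (ev i) (ev k) = ρ (ev i) (ev E0) := colE k (ev i)
      _ = star (ρ (ev E0) (ev i)) := herm _ _
      _ = star (ρ (ev E0) (ev E0)) := by rw [colE i (ev E0)]
      _ = ρ (ev E0) (ev E0) := (herm _ _).symm
  -- columns with extra excitations beyond the pair vanish
  have killp : ∀ h : Fin n → Fin 2, h E0 = 0 → h E1 = 0 → h ≠ zf →
      ∀ g, ρ g (pset E0 E1 (0,1) h) = 0 := by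
    intro h h0 h1 hne g
    have hex : ∃ k, h k ≠ 0 := by
      by_contra hc
      push_neg at hc
      exact hne (funext hc)
    obtain ⟨k, hk0⟩ := hex
    have hk1 : h k = 1 := (fin2_cases (h k)).resolve_left hk0
    have hkE0 : k ≠ E0 := fun e => by rw [e, h0] at hk1; exact absurd hk1 (by decide)
    have hkE1 : k ≠ E1 := fun e => by rw [e, h1] at hk1; exact absurd hk1 (by decide)
    have hkv : 1 < k.val := by
      have h0' : k.val ≠ 0 := fun e => hkE0 (Fin.ext e)
      have h1' : k.val ≠ 1 := fun e => hkE1 (Fin.ext e)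
      omega
    apply pairKill hpsd hmarg k.val 1 hkv k.isLt (pset E0 E1 (0,1) h) ?_ ?_ g
    · exact pset_j _ _
    · show pset E0 E1 (0,1) h k = 1
      rw [pset_k hkE0 hkE1]
      exact hk1
  have hzfmem : (zf : Fin n → Fin 2) ∈
      Finset.univ.filter (fun h : Fin n → Fin 2 => h E0 = 0 ∧ h E1 = 0) := by
    simp [zf]
  -- value of c
  have cval : ρ (ev E0) (ev E0) = ((γ/n : ℝ) : ℂ) := by
    have hval : rhoTarget n γ (0,1) (0,1) = ((γ/n : ℝ) : ℂ) := by
      simp only [rhoTarget]; rw [if_neg (by decide), if_pos (by decide)]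
    have m := congrFun (congrFun (hmarg 0 hj0) (0,1)) (0,1)
    rw [marg_sum ρ hij, hval] at m
    rw [Finset.sum_eq_single_of_mem zf hzfmem] at m
    · rw [pset_zf_01 hij] at m
      rw [← m]
      exact (e11 E1 E1).symm
    · intro h hmem hne
      simp only [Finset.mem_filter, Finset.mem_univ, true_and] at hmem
      exact killp h hmem.1 hmem.2 hne _
  -- value of b
  have bval : ρ zf (ev E0) = 0 := by
    have hval : rhoTarget n γ (0,0) (0,1) = 0 := by
      simp only [rhoTarget]; rw [if_neg (by decide), if_neg (by decide)]
    have m := congrFun (congrFun (hmarg 0 hj0) (0,0)) (0,1)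
    rw [marg_sum ρ hij, hval] at m
    rw [Finset.sum_eq_single_of_mem zf hzfmem] at m
    · rw [pset_zf_01 hij, pset_zf_00 hij] at m
      exact (colE E1 zf).symm.trans m
    · intro h hmem hne
      simp only [Finset.mem_filter, Finset.mem_univ, true_and] at hmem
      have hp00 : pset E0 E1 (0,0) h = h := by
        funext k
        by_cases hki : k = E0
        · subst hki; rw [pset_i hij, hmem.1]
        · by_cases hkj : k = E1
          · subst hkj; rw [pset_j, hmem.2]
          · rw [pset_k hki hkj]
      rw [hp00]
      exact killp h hmem.1 hmem.2 hne h
  have bAll : ∀ i : Fin n, ρ zf (ev i) = 0 := fun i => (colE i zf).trans bval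
  -- value of a from the trace
  have aval : ρ zf zf = ((1 - γ : ℝ) : ℂ) := by
    have htr' : ∑ f : Fin n → Fin 2, ρ f f = 1 := by
      rw [← htr]; rfl
    have hdiag : ∀ f : Fin n → Fin 2, ρ f f =
        (if wt f = 0 then ρ zf zf else 0) + (if wt f = 1 then ρ (ev E0) (ev E0) else 0) := by
      intro f
      rcases Nat.lt_or_ge (wt f) 2 with hl | hg
      · by_cases hw0 : wt f = 0
        · rw [eq_zf_of_wt_zero f hw0]
          simp [wt_zf]
        · have hw1 : wt f = 1 := by omega
          obtain ⟨i, rfl⟩ := eq_ev_of_wt_one f hw1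
          simp only [wt_ev, if_pos rfl]
          rw [if_neg (by norm_num), zero_add]
          exact e11 i i
      · rw [kill2 f hg f, if_neg (by omega), if_neg (by omega), add_zero]
    have hsum : ∑ f : Fin n → Fin 2, ρ f f
        = ρ zf zf + (n : ℂ) * ρ (ev E0) (ev E0) := by
      rw [Finset.sum_congr rfl fun f _ => hdiag f, Finset.sum_add_distrib]
      congr 1
      · rw [← Finset.sum_filter, filter_wt_zero, Finset.sum_singleton]
      · rw [← Finset.sum_filter, Finset.sum_const, card_wt_one, nsmul_eq_mul]
    rw [hsum, cval] at htr'
    have hng : (n : ℂ) * ((γ/n : ℝ) : ℂ) = ((γ : ℝ) : ℂ) := by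
      push_cast
      field_simp
    rw [hng] at htr'
    push_cast
    linear_combination htr'
  -- final identification
  funext f g
  by_cases hf2 : 2 ≤ wt f
  · have h1 : ρ f g = 0 := by rw [herm f g, kill2 f hf2 g, star_zero]
    have hw1 : wt f ≠ 1 := by omega
    have hw0 : wt f ≠ 0 := by omega
    rw [h1, Omega, Wvec_eq, zeroVec_eq, if_neg hw1, if_neg hw0]
    ring
  · by_cases hg2 : 2 ≤ wt g
    · have hw1 : wt g ≠ 1 := by omega
      have hw0 : wt g ≠ 0 := by omega
      rw [kill2 g hg2 f, Omega, Wvec_eq g, zeroVec_eq g, if_neg hw1, if_neg hw0]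
      simp
    · by_cases hf1 : wt f = 1
      · obtain ⟨i, rfl⟩ := eq_ev_of_wt_one f hf1
        by_cases hg1 : wt g = 1
        · obtain ⟨k, rfl⟩ := eq_ev_of_wt_one g hg1
          rw [e11 i k, cval, Omega, Wvec_eq (ev i), Wvec_eq (ev k), zeroVec_eq (ev i),
            zeroVec_eq (ev k), wt_ev, wt_ev, if_pos rfl,
            if_neg (by norm_num : ¬(1:ℕ) = 0), Complex.conj_ofReal, map_zero, mul_zero, add_zero]
          have h2 : (Real.sqrt n) * (Real.sqrt n) = (n:ℝ) :=
            Real.mul_self_sqrt (Nat.cast_nonneg n)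
          rw [mul_assoc, ← Complex.ofReal_mul, div_mul_div_comm, one_mul, h2]
          push_cast
          ring
        · have hg0 : wt g = 0 := by omega
          rw [eq_zf_of_wt_zero g hg0]
          rw [herm (ev i) zf, bAll i, star_zero]
          simp [Omega, Wvec_eq, zeroVec_eq, wt_ev, wt_zf]
      · have hf0 : wt f = 0 := by omega
        rw [eq_zf_of_wt_zero f hf0]
        by_cases hg1 : wt g = 1
        · obtain ⟨k, rfl⟩ := eq_ev_of_wt_one g hg1
          rw [bAll k]
          simp [Omega, Wvec_eq, zeroVec_eq, wt_ev, wt_zf]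
        · have hg0 : wt g = 0 := by omega
          rw [eq_zf_of_wt_zero g hg0, aval]
          simp [Omega, Wvec_eq, zeroVec_eq, wt_zf]
end

section
/- Let v_AB, v_AC, v_BC ∈ ℝ with 3 − (v_AB + v_AC + v_BC) ≥ 0. Then the inequality 2 − (2/3)(v_AB + v_AC + v_BC) ≥ (2/3)√(3(v_AC − v_AB)² + (2v_BC − v_AB − v_AC)²) is equivalent to ((v_BC + 1) − (v_AB + v_AC))² ≤ 4(1 − v_AB)(1 − v_AC). -/
/-- With 3 − (v_AB + v_AC + v_BC) ≥ 0, the inequality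
2 − (2/3)(v_AB+v_AC+v_BC) ≥ (2/3)√(3(v_AC−v_AB)² + (2v_BC−v_AB−v_AC)²)
is equivalent to ((v_BC+1) − (v_AB+v_AC))² ≤ 4(1−v_AB)(1−v_AC). -/
theorem stmt7 (vAB vAC vBC : ℝ) (h : 0 ≤ 3 - (vAB + vAC + vBC)) :
    (2 - (2/3 : ℝ) * (vAB + vAC + vBC) ≥
      (2/3 : ℝ) * Real.sqrt (3 * (vAC - vAB)^2 + (2*vBC - vAB - vAC)^2)) ↔
    ((vBC + 1) - (vAB + vAC))^2 ≤ 4 * (1 - vAB) * (1 - vAC) := by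
  have hE : (0:ℝ) ≤ 3 * (vAC - vAB)^2 + (2*vBC - vAB - vAC)^2 := by positivity
  have hs := Real.sq_sqrt hE
  have hs0 := Real.sqrt_nonneg (3 * (vAC - vAB)^2 + (2*vBC - vAB - vAC)^2)
  constructor
  · intro hle
    nlinarith [hs, hs0, hle]
  · intro hle
    have hE2 : 3 * (vAC - vAB)^2 + (2*vBC - vAB - vAC)^2 ≤ (3 - (vAB + vAC + vBC))^2 := by
      nlinarith
    have := Real.sqrt_le_sqrt hE2
    rw [Real.sqrt_sq h] at this
    linarith
end
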